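/- arXiv:0905.1731 — 3 statements merged into one kernel-verified Lean document; each statement's English description precedes it below -/
import Mathlib

section
/- Let G be an abelian group and H a finitely generated subgroup of G such that the quotient group G ⧸ H is torsion-free. If Φ : G ≃+ G is a group automorphism with Φ(H) ⊆ H, then Φ(H) = H; in particular, Φ restricts to an automorphism of H. -/
/-!
By rank–nullity an injective endomorphism of a finitely generated abelian group has torsion
cokernel, so every `h ∈ H` has a multiple `n • h = Φ y` with `n ≠ 0` and `y ∈ H`. Then
`n • Φ⁻¹ h = y ∈ H`, and torsion-freeness of `G ⧸ H` gives `Φ⁻¹ h ∈ H`.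
-/

open Function

theorem LinearMap.exists_smul_mem_range_of_injective {R M : Type*} [CommRing R] [IsDomain R]
    [AddCommGroup M] [Module R M] [Module.Finite R M] {f : M →ₗ[R] M} (hf : Injective f)
    (x : M) : ∃ r : R, r ≠ 0 ∧ r • x ∈ range f := by
  have hrank : Module.finrank R (M ⧸ range f) = 0 := by
    have := (range f).finrank_quotient_add_finrank
    rw [finrank_range_of_inj hf] at this
    omega
  obtain ⟨⟨r, hr⟩, hrx⟩ := Module.finrank_eq_zero_iff_isTorsion.mp hrank (x := (range f).mkQ x)
  refine ⟨r, nonZeroDivisors.ne_zero hr, ?_⟩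
  rwa [Submonoid.mk_smul, ← map_smul, Submodule.mkQ_apply, Submodule.Quotient.mk_eq_zero] at hrx

theorem AddSubgroup.mem_of_zsmul_mem {G : Type*} [AddCommGroup G] {H : AddSubgroup G}
    (htf : ∀ g : G ⧸ H, g ≠ 0 → ¬IsOfFinAddOrder g) {n : ℤ} (hn : n ≠ 0) {g : G}
    (hng : n • g ∈ H) : g ∈ H := by
  by_contra hg
  refine htf g (by rwa [ne_eq, QuotientAddGroup.eq_zero_iff]) ?_
  refine isOfFinAddOrder_iff_zsmul_eq_zero.mpr ⟨n, hn, ?_⟩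
  rwa [← QuotientAddGroup.mk_zsmul, QuotientAddGroup.eq_zero_iff]

theorem AddSubgroup.map_eq_self_of_map_le {G : Type*} [AddCommGroup G] {H : AddSubgroup G}
    (hfg : H.FG) (htf : ∀ g : G ⧸ H, g ≠ 0 → ¬IsOfFinAddOrder g) (Φ : G ≃+ G)
    (hΦ : map Φ.toAddMonoidHom H ≤ H) : map Φ.toAddMonoidHom H = H := by
  have : Module.Finite ℤ H :=
    Module.Finite.iff_addGroup_fg.mpr ((AddGroup.fg_iff_addSubgroup_fg H).mpr hfg)
  let φ : H →+ H := (inclusion hΦ).comp (Φ.addSubgroupMap H).toAddMonoidHom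
  have hφ : Injective φ.toIntLinearMap :=
    (inclusion_injective hΦ).comp (Φ.addSubgroupMap H).injective
  refine le_antisymm hΦ fun h hh ↦ ⟨Φ.symm h, ?_, Φ.apply_symm_apply h⟩
  obtain ⟨n, hn, y, hy⟩ := LinearMap.exists_smul_mem_range_of_injective hφ ⟨h, hh⟩
  have hny : n • Φ.symm h = y := Φ.injective <| by
    rw [map_zsmul, Φ.apply_symm_apply]
    exact (congrArg Subtype.val hy).symm
  exact mem_of_zsmul_mem htf hn (hny ▸ y.2)

/-- Let `G` be an abelian group and `H` a finitely generated subgroup of `G`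
such that `G ⧸ H` is torsion-free.  If `Φ : G ≃+ G` is a group automorphism with
`Φ(H) ⊆ H`, then `Φ(H) = H`; in particular `Φ` restricts to an automorphism of `H`. -/
theorem stmt1 (G : Type*) [AddCommGroup G] (H : AddSubgroup G) (hfg : H.FG)
    (htf : ∀ g : G ⧸ H, g ≠ 0 → ¬IsOfFinAddOrder g)
    (Φ : G ≃+ G) (hΦ : AddSubgroup.map Φ.toAddMonoidHom H ≤ H) :
    AddSubgroup.map Φ.toAddMonoidHom H = H ∧
      ∃ ψ : H ≃+ H, ∀ x : H, (ψ x : G) = Φ (x : G) := by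
  have hmap := AddSubgroup.map_eq_self_of_map_le hfg htf Φ hΦ
  exact ⟨hmap, (Φ.addSubgroupMap H).trans (AddEquiv.addSubgroupCongr hmap), fun _ ↦ rfl⟩
end

section
/- Let n ≥ 1 and let K = ℤ × (ZMod n → ℤ), a free abelian group modeling the K-group of the n-gon (the first coordinate records the class of a point, the remaining n coordinates the classes of the components of the normalization). Define the automorphism σ : K ≃+ K by σ(a, f) = (a, i ↦ f(i − 1)) (cyclically permuting the last n coordinates and fixing the first), and the additive homomorphism Z : K → ℂ by Z(a, f) = −a + i·(Σ_{j ∈ ZMod n} f(j)). If Φ : K ≃+ K is a group automorphism such that Φ ∘ σ = σ^q ∘ Φ for some natural number q, then Φ maps ker Z into ker Z. -/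
/-!
The orbit sum `N = ∑_{k ∈ ZMod n} σ^k` sends `(a, f)` to `(n • a, const (∑ f))`, so it kills
`ker Z`. Since `Z` is `σ`-invariant and `Φ σ^k = σ^(q k) Φ`, we get `Z (Φ (N x)) = n • Z (Φ x)`;
hence `N x = 0` forces `Z (Φ x) = 0`, because `ℂ` is torsion-free.
-/

open Finset Function

theorem apply_map_eq_zero_of_sum_iterate_eq_zero {K M ι F : Type*} [AddCommMonoid K]
    [AddCommMonoid M] [IsAddTorsionFree M] [Fintype ι] [Nonempty ι] [FunLike F K K]
    [AddMonoidHomClass F K K] {σ : K → K} {Φ : F} {Z : K →+ M} {q : ℕ} (e : ι → ℕ)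
    (hZσ : ∀ y, Z (σ y) = Z y) (hΦσ : ∀ y, Φ (σ y) = σ^[q] (Φ y))
    {x : K} (hx : ∑ k, σ^[e k] x = 0) : Z (Φ x) = 0 := by
  have hZ (m : ℕ) (y : K) : Z (σ^[m] y) = Z y := by
    simpa using (Semiconj.iterate_right (f := Z) (gb := id) hZσ m) y
  have hΦ (m : ℕ) (y : K) : Φ (σ^[m] y) = σ^[q * m] (Φ y) := by
    rw [iterate_mul]
    exact (Semiconj.iterate_right hΦσ m) y
  refine nsmul_right_injective (Fintype.card_ne_zero (α := ι)) ?_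
  calc Fintype.card ι • Z (Φ x) = ∑ k, Z (σ^[q * e k] (Φ x)) := by simp [hZ]
    _ = Z (Φ (∑ k, σ^[e k] x)) := by simp [hΦ, map_sum]
    _ = Fintype.card ι • 0 := by rw [hx, map_zero, map_zero, smul_zero]

namespace NGon

variable {n : ℕ} {σ : ℤ × (ZMod n → ℤ) → ℤ × (ZMod n → ℤ)}

theorem iterate_shift_apply (hσ : ∀ (a : ℤ) (f : ZMod n → ℤ), σ (a, f) = (a, fun i => f (i - 1)))
    (m : ℕ) (a : ℤ) (f : ZMod n → ℤ) : σ^[m] (a, f) = (a, fun i => f (i - m)) := by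
  induction m with
  | zero => simp
  | succ m ih =>
    rw [iterate_succ_apply', ih, hσ]
    simp only [Nat.cast_succ, sub_sub, add_comm]

theorem sum_iterate_shift_apply [NeZero n]
    (hσ : ∀ (a : ℤ) (f : ZMod n → ℤ), σ (a, f) = (a, fun i => f (i - 1)))
    (a : ℤ) (f : ZMod n → ℤ) :
    ∑ k : ZMod n, σ^[k.val] (a, f) = (n • a, fun _ => ∑ j, f j) := by
  simp only [iterate_shift_apply hσ, ZMod.natCast_zmod_val]
  ext i
  · simp [Prod.fst_sum]
  · rw [Prod.snd_sum, Finset.sum_apply]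
    exact Fintype.sum_equiv (Equiv.subLeft i) _ _ fun _ => rfl

theorem apply_shift_eq [NeZero n]
    (hσ : ∀ (a : ℤ) (f : ZMod n → ℤ), σ (a, f) = (a, fun i => f (i - 1)))
    {Z : (ℤ × (ZMod n → ℤ)) →+ ℂ}
    (hZ : ∀ (a : ℤ) (f : ZMod n → ℤ),
      Z (a, f) = -(a : ℂ) + Complex.I * (∑ j : ZMod n, (f j : ℂ))) (y : ℤ × (ZMod n → ℤ)) :
    Z (σ y) = Z y := by
  obtain ⟨a, f⟩ := y
  rw [hσ, hZ, hZ, Fintype.sum_equiv (Equiv.subRight 1) (fun j => (f (j - 1) : ℂ))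
    (fun j => (f j : ℂ)) fun _ => rfl]

theorem mem_ker_iff [NeZero n] {Z : (ℤ × (ZMod n → ℤ)) →+ ℂ}
    (hZ : ∀ (a : ℤ) (f : ZMod n → ℤ),
      Z (a, f) = -(a : ℂ) + Complex.I * (∑ j : ZMod n, (f j : ℂ))) (a : ℤ) (f : ZMod n → ℤ) :
    (a, f) ∈ Z.ker ↔ a = 0 ∧ ∑ j, f j = 0 := by
  rw [AddMonoidHom.mem_ker, hZ, ← Int.cast_sum, Complex.ext_iff]
  simp [-Int.cast_sum]

end NGon

/-- Let `n ≥ 1` and `K = ℤ × (ZMod n → ℤ)` (modeling the K-group of the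
n-gon).  Let `σ` be the automorphism `σ (a, f) = (a, i ↦ f (i - 1))` (cyclically
permuting the last `n` coordinates), and let `Z : K →+ ℂ` be
`Z (a, f) = -a + i · (∑ j, f j)`.  If `Φ : K ≃+ K` is a group automorphism with
`Φ ∘ σ = σ^q ∘ Φ` for some natural number `q`, then `Φ` maps `ker Z` into `ker Z`. -/
theorem stmt2 (n : ℕ) [NeZero n]
    (σ : (ℤ × (ZMod n → ℤ)) ≃+ (ℤ × (ZMod n → ℤ)))
    (hσ : ∀ (a : ℤ) (f : ZMod n → ℤ), σ (a, f) = (a, fun i => f (i - 1)))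
    (Z : (ℤ × (ZMod n → ℤ)) →+ ℂ)
    (hZ : ∀ (a : ℤ) (f : ZMod n → ℤ),
      Z (a, f) = -(a : ℂ) + Complex.I * (∑ j : ZMod n, (f j : ℂ)))
    (Φ : (ℤ × (ZMod n → ℤ)) ≃+ (ℤ × (ZMod n → ℤ))) (q : ℕ)
    (hΦσ : ∀ x, Φ (σ x) = (⇑σ)^[q] (Φ x)) :
    ∀ x ∈ Z.ker, Φ x ∈ Z.ker := by
  rintro ⟨a, f⟩ hx
  obtain ⟨rfl, hf⟩ := (NGon.mem_ker_iff hZ a f).1 hx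
  refine apply_map_eq_zero_of_sum_iterate_eq_zero (ZMod.val (n := n))
    (NGon.apply_shift_eq hσ hZ) hΦσ ?_
  rw [NGon.sum_iterate_shift_apply hσ, hf, smul_zero]
  rfl
end

section
/- Let n ≥ 1 and let a, b be coprime integers. Set d = gcd(n, b) (a positive integer, with the convention gcd(n, 0) = n). Then there exist γ ∈ Γ₀(n) and an integer c with gcd(c, d) = 1 such that the matrix-vector product of γ with the column vector (a, b) equals the column vector (c, d). -/
/-!
The bottom rows of matrices in `Γ₀(n)` are the primitive rows `(C, D)` with `n ∣ C`, and any
such row completes to a matrix. So it suffices to find one with `C a + D b = d`: as `γ` is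
invertible over `ℤ`, the vector `γ (a, b) = (c, d)` is again primitive, i.e. `gcd (c, d) = 1`.
To find the row, write `n = d n'`, `b = d b'`. Then `n' a` and `b'` are coprime, the solutions
of `n' a t + b' s = 1` have `s` running through a progression `s₀ + k n' a` with `s₀` prime to
its difference, so `s` can be taken prime to `d`; then `(n t, s)` is primitive and
`n t a + s b = d`.
-/

/-- Lift `x` from a unit modulo `|y|` to a unit modulo `|y| * m`. -/
lemma IsCoprime.exists_isCoprime_add_mul {x y : ℤ} (h : IsCoprime x y) {m : ℕ} (hm : m ≠ 0) :
    ∃ k : ℤ, IsCoprime (x + k * y) m := by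
  rcases eq_or_ne y 0 with rfl | hy
  · exact ⟨0, by simpa using h.of_isCoprime_of_dvd_right (dvd_zero (m : ℤ))⟩
  have : NeZero (y.natAbs * m) := ⟨mul_ne_zero (Int.natAbs_ne_zero.mpr hy) hm⟩
  have hx : IsUnit (x : ZMod y.natAbs) := by
    rw [ZMod.coe_int_isUnit_iff_isCoprime, Int.natCast_natAbs]
    exact h.symm.abs_left
  obtain ⟨w, hw⟩ := ZMod.unitsMap_surjective (dvd_mul_right y.natAbs m) hx.unit
  set z : ℤ := ((w : ZMod (y.natAbs * m)).val : ℤ)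
  have hzx : (z : ZMod y.natAbs) = x := by
    rw [ZMod.unitsMap_def, ← Units.val_inj, Units.coe_map, IsUnit.unit_spec, MonoidHom.coe_coe,
      ZMod.castHom_apply] at hw
    rw [← hw, Int.cast_natCast, ZMod.natCast_val]
  have hz : IsCoprime z m :=
    Nat.isCoprime_iff_coprime.mpr (ZMod.val_coe_unit_coprime w).coprime_mul_left_right
  obtain ⟨k, hk⟩ : y ∣ z - x :=
    Int.natAbs_dvd.mp ((ZMod.intCast_eq_intCast_iff_dvd_sub x z _).mp hzx.symm)
  exact ⟨k, by rwa [show x + k * y = z by linear_combination -hk]⟩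

lemma exists_isCoprime_dvd_mul_add_mul_eq_gcd {n : ℕ} (hn : n ≠ 0) {a b : ℤ}
    (hab : IsCoprime a b) :
    ∃ C D : ℤ, (n : ℤ) ∣ C ∧ IsCoprime C D ∧ C * a + D * b = Int.gcd n b := by
  have hd : 0 < Int.gcd n b := Int.gcd_pos_of_ne_zero_left b (by exact_mod_cast hn)
  obtain ⟨n', b', hn'b', hn', hb'⟩ := Int.exists_gcd_one hd
  generalize Int.gcd n b = d at *
  have hb'a : IsCoprime b' a := hab.symm.of_isCoprime_of_dvd_left ⟨d, hb'⟩
  obtain ⟨u, v, huv⟩ := (Int.isCoprime_iff_gcd_eq_one.mpr hn'b').symm.mul_right hb'a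
  have hu : IsCoprime u (n' * a) := ⟨b', v, by linear_combination huv⟩
  obtain ⟨k, hk⟩ := hu.exists_isCoprime_add_mul hd.ne'
  have hrow : n' * (v - k * b') * a + (u + k * (n' * a)) * b' = 1 := by linear_combination huv
  refine ⟨n * (v - k * b'), u + k * (n' * a), dvd_mul_right _ _, ?_, ?_⟩
  · rw [hn', mul_comm n', mul_assoc]
    exact hk.symm.mul_left ⟨a, b', by linear_combination hrow⟩
  · rw [hn', hb']
    linear_combination (d : ℤ) * hrow

/-- Let `n ≥ 1` and `a, b` coprime integers.  Set `d = gcd (n, b)` (a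
positive integer).  Then there exist `γ ∈ Γ₀(n)` and an integer `c` with
`gcd (c, d) = 1` such that the matrix-vector product of `γ` with `(a, b)` equals
`(c, d)`. -/
theorem stmt6 (n : ℕ) (hn : 1 ≤ n) (a b : ℤ) (hab : Int.gcd a b = 1) :
    ∃ γ ∈ CongruenceSubgroup.Gamma0 n, ∃ c : ℤ,
      Int.gcd c (Int.gcd (n : ℤ) b) = 1 ∧
      (γ : Matrix (Fin 2) (Fin 2) ℤ) 0 0 * a + (γ : Matrix (Fin 2) (Fin 2) ℤ) 0 1 * b = c ∧
      (γ : Matrix (Fin 2) (Fin 2) ℤ) 1 0 * a + (γ : Matrix (Fin 2) (Fin 2) ℤ) 1 1 * b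
        = (Int.gcd (n : ℤ) b : ℤ) := by
  have hab : IsCoprime a b := Int.isCoprime_iff_gcd_eq_one.mpr hab
  obtain ⟨C, D, hnC, hCD, hrow⟩ :=
    exists_isCoprime_dvd_mul_add_mul_eq_gcd (Nat.one_le_iff_ne_zero.mp hn) hab
  obtain ⟨γ, hγC, hγD⟩ := hCD.exists_SL2_row 1
  have hγ : γ ∈ CongruenceSubgroup.Gamma0 n := by
    rw [CongruenceSubgroup.Gamma0_mem, hγC]
    exact (ZMod.intCast_zmod_eq_zero_iff_dvd C n).mpr hnC
  have hbottom : γ 1 0 * a + γ 1 1 * b = Int.gcd n b := by rw [hγC, hγD, hrow]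
  refine ⟨γ, hγ, _, ?_, rfl, hbottom⟩
  rw [← Int.isCoprime_iff_gcd_eq_one, ← hbottom]
  simpa [Matrix.mulVec, dotProduct, Fin.sum_univ_two] using
    IsCoprime.mulVecSL (v := ![a, b]) hab γ
end
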